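/- arXiv:2506.19971 — 2 statements merged into one kernel-verified Lean document; each statement's English description precedes it below -/
import Mathlib

section
/- Let f : ℂ → ℂ be an analytic function (given by a convergent power series on a disc of radius R). Let X be an n × n complex matrix whose spectrum lies in the disc |z| < R, with Jordan decomposition X = ∑_k λ_k P_k + ∑_k N_k, where the P_k are the spectral projections onto the generalized eigenspaces (P_k P_j = δ_{kj} P_k, ∑_k P_k = I) and N_k = (X − λ_k I) P_k are the nilpotent parts (N_k^{m_k} = 0, P_k N_k = N_k P_k = N_k). Then f(X) = ∑_k ( f(λ_k) P_k + ∑_{q=1}^{m_k − 1} (f^{(q)}(λ_k)/q!) N_k^q ). -/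
open scoped BigOperators


lemma ofScalars_coeff (d : ℕ → ℂ) (n : ℕ) :
    (FormalMultilinearSeries.ofScalars ℂ d).coeff n = d n := by
  show (FormalMultilinearSeries.ofScalars ℂ d n) (fun _ => (1 : ℂ)) = d n
  rw [FormalMultilinearSeries.ofScalars_apply_eq]
  simp

/-- Term-by-term differentiation of a power series on a disc. -/
lemma termwise_deriv {d : ℕ → ℂ} {R : ℝ} {g : ℂ → ℂ}
    (hg : ∀ z : ℂ, ‖z‖ < R → HasSum (fun q : ℕ => d q * z ^ q) (g z))
    {z : ℂ} (hz : ‖z‖ < R) :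
    HasSum (fun q : ℕ => ((q : ℂ) + 1) * d (q + 1) * z ^ q) (deriv g z) := by
  have hR : 0 < R := lt_of_le_of_lt (norm_nonneg z) hz
  set p := FormalMultilinearSeries.ofScalars ℂ d with hp
  have hball : HasFPowerSeriesOnBall g p 0 (ENNReal.ofReal R) := by
    refine ⟨?_, by simp [hR], ?_⟩
    · refine ENNReal.le_of_forall_nnreal_lt fun r hr => ?_
      have hrR : (r : ℝ) < R := by
        rw [← ENNReal.ofReal_coe_nnreal, ENNReal.ofReal_lt_ofReal_iff hR] at hr
        exact hr
      have hsum := (hg (r : ℝ) (by simpa using hrR)).summable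
      apply p.le_radius_of_tendsto (l := 0)
      have h0 := hsum.tendsto_atTop_zero
      have h1 : Filter.Tendsto (fun n : ℕ => ‖d n * ((r : ℝ) : ℂ) ^ n‖)
          Filter.atTop (nhds 0) := by simpa using h0.norm
      convert h1 using 2 with n
      simp [hp, FormalMultilinearSeries.ofScalars_norm, norm_mul, norm_pow,
        Complex.norm_real, abs_of_nonneg r.coe_nonneg, ofScalars_coeff]
    · intro y hy
      have hy' : ‖y‖ < R := by
        simpa [EMetric.mem_ball, edist_eq_enorm_sub, ← ofReal_norm,
          ENNReal.ofReal_lt_ofReal_iff hR] using hy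
      simpa [hp, FormalMultilinearSeries.ofScalars_apply_eq, smul_eq_mul, ofScalars_coeff,
        mul_comm] using hg y hy'
  have hder := hball.fderiv
  have hs := hder.hasSum (y := z)
    (by simpa [EMetric.mem_ball, edist_eq_enorm_sub, ← ofReal_norm,
          ENNReal.ofReal_lt_ofReal_iff hR] using hz)
  have hs1 := (ContinuousLinearMap.apply ℂ ℂ (1 : ℂ)).hasSum hs
  have key : ∀ q : ℕ, (ContinuousLinearMap.apply ℂ ℂ (1 : ℂ))
      (p.derivSeries q fun _ => z) = ((q : ℂ) + 1) * d (q + 1) * z ^ q := by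
    intro q
    have h1 : (fun _ : Fin q => z) = fun _ : Fin q => z • (1 : ℂ) := by
      funext i; simp
    have h2 : (p.derivSeries q fun _ => z) = z ^ q • (p.derivSeries q fun _ => (1 : ℂ)) := by
      rw [h1, ContinuousMultilinearMap.map_smul_univ]
      simp
    have h3 := p.derivSeries_apply_diag q (1 : ℂ)
    have h4 : p (q + 1) (fun _ => (1 : ℂ)) = d (q + 1) := by
      simp [hp, FormalMultilinearSeries.ofScalars_apply_eq, ofScalars_coeff]
    simp only [ContinuousLinearMap.apply_apply, h2, ContinuousLinearMap.smul_apply]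
    rw [h3, h4]
    simp [smul_eq_mul]
    ring
  have hs2 : HasSum (fun q : ℕ => ((q : ℂ) + 1) * d (q + 1) * z ^ q)
      (fderiv ℂ g (0 + z) 1) := by
    simpa only [key, ContinuousLinearMap.apply_apply] using hs1
  rw [zero_add, fderiv_apply_one_eq_deriv] at hs2
  exact hs2
lemma iter_hasSum {c : ℕ → ℂ} {R : ℝ} {f : ℂ → ℂ}
    (hf : ∀ z : ℂ, ‖z‖ < R → HasSum (fun q : ℕ => c q * z ^ q) (f z)) (j : ℕ) :
    ∀ z : ℂ, ‖z‖ < R →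
      HasSum (fun q : ℕ => c (q + j) * ((q + j).descFactorial j : ℂ) * z ^ q)
        (iteratedDeriv j f z) := by
  induction j with
  | zero => intro z hz; simpa using hf z hz
  | succ j ih =>
    intro z hz
    rw [iteratedDeriv_succ]
    have h := termwise_deriv (fun z hz => ih z hz) hz
    convert h using 2 with q
    have hdesc : (q + 1 + j).descFactorial (j + 1)
        = (q + 1) * ((q + 1 + j).descFactorial j) := by
      rw [Nat.descFactorial_succ]
      congr 1
      omega
    rw [show q + (j + 1) = q + 1 + j by omega, hdesc]
    push_cast
    ring

lemma choose_hasSum {c : ℕ → ℂ} {R : ℝ} {f : ℂ → ℂ}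
    (hf : ∀ z : ℂ, ‖z‖ < R → HasSum (fun q : ℕ => c q * z ^ q) (f z))
    {lam : ℂ} (hl : ‖lam‖ < R) (j : ℕ) :
    HasSum (fun q : ℕ => c q * (q.choose j : ℂ) * lam ^ (q - j))
      (iteratedDeriv j f lam / (j.factorial : ℂ)) := by
  have h2 := (iter_hasSum hf j lam hl).div_const (j.factorial : ℂ)
  have hfac : (j.factorial : ℂ) ≠ 0 := Nat.cast_ne_zero.mpr j.factorial_ne_zero
  have h4 : HasSum (fun q : ℕ => c (q + j) * (((q + j).choose j : ℂ)) * lam ^ (q + j - j))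
      (iteratedDeriv j f lam / (j.factorial : ℂ)) := by
    convert h2 using 2 with q
    · rfl
    rw [Nat.add_sub_cancel, Nat.descFactorial_eq_factorial_mul_choose]
    push_cast
    field_simp
  have h5 := (hasSum_nat_add_iff
    (f := fun q : ℕ => c q * (q.choose j : ℂ) * lam ^ (q - j)) j).mp h4
  have hz : ∑ i ∈ Finset.range j, c i * (i.choose j : ℂ) * lam ^ (i - j) = 0 := by
    apply Finset.sum_eq_zero
    intro i hi
    rw [Nat.choose_eq_zero_of_lt (Finset.mem_range.mp hi)]
    simp
  rwa [hz, add_zero] at h5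


/-- Spectral mapping theorem via Jordan decomposition: if `f` is given by a power series with
coefficients `c` converging on the disc of radius `R`, `X` is a complex matrix whose Jordan
decomposition is `X = ∑ₖ λₖ Pₖ + ∑ₖ Nₖ` with spectral projections `Pₖ` and nilpotent parts
`Nₖ = (X − λₖ I) Pₖ`, all eigenvalues satisfying `|λₖ| < R`, and `FX` is the sum of the power
series of `f` applied to `X`, then
`FX = ∑ₖ ( f(λₖ) Pₖ + ∑_{q=1}^{mₖ−1} (f^{(q)}(λₖ)/q!) Nₖ^q )`. -/
theorem spectral_mapping_jordan {n K : ℕ}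
    (f : ℂ → ℂ) (c : ℕ → ℂ) (R : ℝ)
    (hf : ∀ z : ℂ, ‖z‖ < R → HasSum (fun q : ℕ => c q * z ^ q) (f z))
    (X : Matrix (Fin n) (Fin n) ℂ)
    (lam : Fin K → ℂ) (P N : Fin K → Matrix (Fin n) (Fin n) ℂ) (m : Fin K → ℕ)
    (hX : X = ∑ k, lam k • P k + ∑ k, N k)
    (hPP : ∀ k j, P k * P j = if k = j then P k else 0)
    (hPsum : ∑ k, P k = 1)
    (hN : ∀ k, N k = (X - lam k • 1) * P k)
    (hNm : ∀ k, N k ^ m k = 0)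
    (hPN : ∀ k, P k * N k = N k) (hNP : ∀ k, N k * P k = N k)
    (hspec : ∀ k, ‖lam k‖ < R)
    (FX : Matrix (Fin n) (Fin n) ℂ)
    (hFX : HasSum (fun q : ℕ => c q • X ^ q) FX) :
    FX = ∑ k, (f (lam k) • P k +
      ∑ q ∈ Finset.Ico 1 (m k), (iteratedDeriv q f (lam k) / (Nat.factorial q : ℂ)) • N k ^ q) := by

  rcases Nat.eq_zero_or_pos n with rfl | hn
  · exact Subsingleton.elim _ _
  classical
  have hone : (1 : Matrix (Fin n) (Fin n) ℂ) ≠ 0 := by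
    intro h
    have := congrFun (congrFun h ⟨0, hn⟩) ⟨0, hn⟩
    simp [Matrix.one_apply] at this
  have hm : ∀ k, 0 < m k := by
    intro k
    rcases Nat.eq_zero_or_pos (m k) with h | h
    · exact absurd (by simpa [h] using hNm k) hone
    · exact h
  have hPNo : ∀ k j, k ≠ j → P k * N j = 0 := by
    intro k j hkj
    rw [← hPN j, ← mul_assoc, hPP k j, if_neg hkj, zero_mul]
  have hXP : ∀ k, X * P k = lam k • P k + N k := by
    intro k
    have h := hN k
    rw [sub_mul, smul_mul_assoc, one_mul] at h
    rw [h]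
    abel
  have hPX : ∀ k, P k * X = lam k • P k + N k := by
    intro k
    have e1 : ∀ j, P k * (lam j • P j) = if k = j then lam k • P k else 0 := by
      intro j
      rw [mul_smul_comm, hPP k j]
      split_ifs with h
      · subst h; rfl
      · simp
    have e2 : ∀ j, P k * N j = if k = j then N k else 0 := by
      intro j
      split_ifs with h
      · subst h; exact hPN k
      · exact hPNo k j h
    rw [hX, mul_add, Finset.mul_sum, Finset.mul_sum]
    simp only [e1, e2, Finset.sum_ite_eq, Finset.mem_univ, if_true]
  have hXPc : ∀ k, X * P k = P k * X := by intro k; rw [hXP, hPX]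
  have hXN : ∀ k, X * N k = N k * X := by
    intro k
    have hc : X * (X - lam k • 1) = (X - lam k • 1) * X := by
      rw [mul_sub, sub_mul, mul_smul_comm, smul_mul_assoc, mul_one, one_mul]
    calc X * N k = X * ((X - lam k • 1) * P k) := by rw [hN k]
      _ = (X * (X - lam k • 1)) * P k := by rw [mul_assoc]
      _ = (X - lam k • 1) * (X * P k) := by rw [hc, mul_assoc]
      _ = (X - lam k • 1) * (P k * X) := by rw [hXPc]
      _ = ((X - lam k • 1) * P k) * X := by rw [mul_assoc]
      _ = N k * X := by rw [← hN k]
  set B : Fin K → Matrix (Fin n) (Fin n) ℂ := fun k => N k + lam k • 1 with hB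
  have hBP : ∀ k, B k * P k = lam k • P k + N k := by
    intro k
    rw [hB]
    simp only [add_mul, smul_mul_assoc, one_mul, hNP k]
    abel
  have hXB : ∀ k, Commute X (B k) := by
    intro k
    apply Commute.add_right
    · exact hXN k
    · exact (Commute.one_right X).smul_right _
  have hXqP : ∀ k q, X ^ q * P k = B k ^ q * P k := by
    intro k q
    induction q with
    | zero => simp
    | succ q ih =>
      calc X ^ (q + 1) * P k = X * (X ^ q * P k) := by rw [pow_succ', mul_assoc]
        _ = X * (B k ^ q * P k) := by rw [ih]
        _ = (X * B k ^ q) * P k := by rw [mul_assoc]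
        _ = (B k ^ q * X) * P k := by rw [((hXB k).pow_right q).eq]
        _ = B k ^ q * (X * P k) := by rw [mul_assoc]
        _ = B k ^ q * (B k * P k) := by rw [hXP k, ← hBP k]
        _ = B k ^ (q + 1) * P k := by rw [← mul_assoc, ← pow_succ]
  have hNone : ∀ k, Commute (N k) (lam k • 1) := fun k => (Commute.one_right (N k)).smul_right _
  have hBpow : ∀ k q, B k ^ q
      = ∑ j ∈ Finset.range (q + 1), ((q.choose j : ℂ) * lam k ^ (q - j)) • N k ^ j := by
    intro k q
    rw [hB]
    rw [(hNone k).add_pow]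
    apply Finset.sum_congr rfl
    intro j _
    rw [smul_pow, one_pow]
    rw [show ((q.choose j : ℕ) : Matrix (Fin n) (Fin n) ℂ) = ((q.choose j : ℂ)) • 1 by
      rw [Nat.cast_smul_eq_nsmul, nsmul_eq_mul, mul_one]]
    rw [mul_smul_comm, mul_one, mul_smul_comm, mul_one, smul_smul, mul_comm]
  have hNzero : ∀ k j, m k ≤ j → N k ^ j = 0 := by
    intro k j hj
    calc N k ^ j = N k ^ m k * N k ^ (j - m k) := by rw [← pow_add, Nat.add_sub_cancel' hj]
      _ = 0 := by rw [hNm k, zero_mul]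
  have hXqPm : ∀ k q, X ^ q * P k
      = ∑ j ∈ Finset.range (m k), ((q.choose j : ℂ) * lam k ^ (q - j)) • (N k ^ j * P k) := by
    intro k q
    rw [hXqP k q, hBpow k q, Finset.sum_mul]
    simp only [smul_mul_assoc]
    set T : ℕ → Matrix (Fin n) (Fin n) ℂ :=
      fun j => ((q.choose j : ℂ) * lam k ^ (q - j)) • (N k ^ j * P k) with hT
    have hT1 : ∀ j, q + 1 ≤ j → T j = 0 := by
      intro j hj
      simp [hT, Nat.choose_eq_zero_of_lt (by omega : q < j)]
    have hT2 : ∀ j, m k ≤ j → T j = 0 := by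
      intro j hj
      simp [hT, hNzero k j hj]
    have e1 : ∑ j ∈ Finset.range (q + 1), T j = ∑ j ∈ Finset.range ((q + 1) ⊔ m k), T j :=
      Finset.sum_subset (Finset.range_subset_range.mpr le_sup_left)
        (fun x _ hxs => hT1 x (by simpa using hxs))
    have e2 : ∑ j ∈ Finset.range (m k), T j = ∑ j ∈ Finset.range ((q + 1) ⊔ m k), T j :=
      Finset.sum_subset (Finset.range_subset_range.mpr le_sup_right)
        (fun x _ hxs => hT2 x (by simpa using hxs))
    rw [e1, ← e2]
  have hkHasSum : ∀ k, HasSum (fun q : ℕ => c q • (X ^ q * P k))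
      (∑ j ∈ Finset.range (m k),
        (iteratedDeriv j f (lam k) / (j.factorial : ℂ)) • (N k ^ j * P k)) := by
    intro k
    have hterm : ∀ q : ℕ, c q • (X ^ q * P k)
        = ∑ j ∈ Finset.range (m k),
            (c q * (q.choose j : ℂ) * lam k ^ (q - j)) • (N k ^ j * P k) := by
      intro q
      rw [hXqPm k q, Finset.smul_sum]
      apply Finset.sum_congr rfl
      intro j _
      rw [smul_smul, mul_assoc]
    have H := hasSum_sum (s := Finset.range (m k))
      (f := fun j (q : ℕ) => (c q * (q.choose j : ℂ) * lam k ^ (q - j)) • (N k ^ j * P k))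
      (a := fun j => (iteratedDeriv j f (lam k) / (j.factorial : ℂ)) • (N k ^ j * P k))
      (fun j _ => (choose_hasSum hf (hspec k) j).smul_const _)
    rw [show (fun q : ℕ => c q • (X ^ q * P k)) = _ from funext hterm]
    exact H
  have htot : HasSum (fun q : ℕ => c q • X ^ q)
      (∑ k, ∑ j ∈ Finset.range (m k),
        (iteratedDeriv j f (lam k) / (j.factorial : ℂ)) • (N k ^ j * P k)) := by
    have H := hasSum_sum (s := (Finset.univ : Finset (Fin K)))
      (f := fun k (q : ℕ) => c q • (X ^ q * P k))
      (a := fun k => ∑ j ∈ Finset.range (m k),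
        (iteratedDeriv j f (lam k) / (j.factorial : ℂ)) • (N k ^ j * P k))
      (fun k _ => hkHasSum k)
    have he : (fun q : ℕ => ∑ k, c q • (X ^ q * P k)) = fun q : ℕ => c q • X ^ q := by
      funext q
      rw [← Finset.smul_sum, ← Finset.mul_sum, hPsum, mul_one]
    rwa [he] at H
  rw [hFX.unique htot]
  apply Finset.sum_congr rfl
  intro k _
  rw [Finset.range_eq_Ico, Finset.sum_eq_sum_Ico_succ_bot (hm k)]
  congr 1
  · simp [iteratedDeriv_zero]
  · apply Finset.sum_congr rfl
    intro j hj
    have hj1 : 1 ≤ j := (Finset.mem_Ico.mp hj).1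
    obtain ⟨i, rfl⟩ : ∃ i, j = i + 1 := ⟨j - 1, by omega⟩
    rw [pow_succ, mul_assoc, hNP k, ← pow_succ]
end

section
/- Let X be an n × n complex matrix with Jordan decomposition X = X_P + X_N, where X_P = ∑_k λ_k P_k is the diagonalizable (semisimple) part and X_N = ∑_k N_k is the nilpotent part. Then X_P and X_N commute, X_N is nilpotent (X_N^n = 0), and this decomposition is unique: if X = S + N with S diagonalizable, N nilpotent, and SN = NS, then S = X_P and N = X_N. -/
open scoped BigOperators
open Polynomial

/-- A complex matrix is diagonalizable if it is similar to a diagonal matrix. -/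
def Matrix.IsDiagonalizable {n : ℕ} (S : Matrix (Fin n) (Fin n) ℂ) : Prop :=
  ∃ (U D : Matrix (Fin n) (Fin n) ℂ), IsUnit U ∧ D.IsDiag ∧ S = U * D * U⁻¹

lemma my_commute_aeval {R A : Type*} [CommSemiring R] [Semiring A] [Algebra R A]
    {a b : A} (h : Commute a b) (f : R[X]) : Commute a (aeval b f) := by
  induction f using Polynomial.induction_on with
  | C r => simpa using Algebra.commute_algebraMap_right r a
  | add p q hp hq => simpa [map_add] using hp.add_right hq
  | monomial n r _ =>
      simp only [map_mul, aeval_C, map_pow, aeval_X]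
      exact (Algebra.commute_algebraMap_right r a).mul_right (h.pow_right _)

lemma my_aeval_conj {R A : Type*} [CommSemiring R] [Ring A] [Algebra R A]
    (u : Aˣ) (d : A) (f : R[X]) :
    aeval ((u : A) * d * ((u⁻¹ : Aˣ) : A)) f = (u : A) * aeval d f * ((u⁻¹ : Aˣ) : A) := by
  induction f using Polynomial.induction_on with
  | C r =>
      simp only [aeval_C]
      rw [(Algebra.commute_algebraMap_right r (u : A)).eq, mul_assoc, Units.mul_inv, mul_one]
  | add p q hp hq => simp [map_add, hp, hq, mul_add, add_mul]
  | monomial k r ih =>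
      simp only [map_mul, map_pow, aeval_X, pow_succ, ← mul_assoc] at ih ⊢
      rw [ih]
      simp [mul_assoc, Units.inv_mul]


lemma my_aeval_diagonal {n : ℕ} (d : Fin n → ℂ) (f : ℂ[X]) :
    aeval (Matrix.diagonal d) f = Matrix.diagonal (fun i => Polynomial.eval (d i) f) := by
  induction f using Polynomial.induction_on with
  | C r => simp [Matrix.algebraMap_eq_diagonal]
  | add p q hp hq => simp [map_add, hp, hq, Matrix.diagonal_add]
  | monomial k r ih =>
      simp only [map_mul, map_pow, aeval_X, aeval_C, Matrix.algebraMap_eq_diagonal,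
        Matrix.diagonal_pow, Matrix.diagonal_mul_diagonal, eval_mul, eval_pow, eval_X, eval_C]
      congr

/-- Jordan–Chevalley decomposition: with the Riesz spectral projections `Pₖ = pₖ(X)` of `X`
(encoded via the Chinese-remainder congruences `pₖ ≡ δ_{kj} mod (t − λⱼ)^{mⱼ}` for the distinct
eigenvalues `λⱼ`, which exhaust the spectrum: `∏ⱼ (X − λⱼ I)^{mⱼ} = 0`), the semisimple part
`X_P = ∑ₖ λₖ Pₖ` and nilpotent part `X_N = X − X_P = ∑ₖ Nₖ` commute, `X_N` is nilpotent
(`X_Nⁿ = 0`), and the decomposition is unique: if `X = S + N` with `S` diagonalizable, `N`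
nilpotent and `SN = NS`, then `S = X_P` and `N = X_N`. -/
theorem jordan_chevalley {n K : ℕ}
    (X : Matrix (Fin n) (Fin n) ℂ)
    (lam : Fin K → ℂ) (hlam : Function.Injective lam)
    (m : Fin K → ℕ) (hm : ∀ k, 0 < m k)
    (hannih : Polynomial.aeval X (∏ k, (Polynomial.X - C (lam k)) ^ m k) = 0)
    (p : Fin K → Polynomial ℂ)
    (hcrt : ∀ k j, ((Polynomial.X - C (lam j)) ^ m j) ∣ (p k - if k = j then 1 else 0))
    (P : Fin K → Matrix (Fin n) (Fin n) ℂ)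
    (hP : ∀ k, P k = Polynomial.aeval X (p k))
    (XP XN : Matrix (Fin n) (Fin n) ℂ)
    (hXP : XP = ∑ k, lam k • P k) (hXN : XN = X - XP) :
    XP * XN = XN * XP ∧
    XN ^ n = 0 ∧
    (∀ S N : Matrix (Fin n) (Fin n) ℂ, X = S + N → S.IsDiagonalizable →
      N ^ n = 0 → S * N = N * S → S = XP ∧ N = XN) := by
  classical
  set q : Fin K → ℂ[X] := fun j => (Polynomial.X - C (lam j)) ^ m j with hq
  -- if every q j divides f, then f annihilates X
  have key : ∀ f : ℂ[X], (∀ j, q j ∣ f) → Polynomial.aeval X f = 0 := by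
    intro f hf
    have hcop : ((Finset.univ : Finset (Fin K)) : Set (Fin K)).Pairwise (Function.onFun IsCoprime q) := by
      intro i _ j _ hij
      exact (Polynomial.pairwise_coprime_X_sub_C hlam hij).pow
    obtain ⟨c, hc⟩ := Finset.prod_dvd_of_coprime hcop (fun j _ => hf j)
    rw [hc, map_mul, hannih, zero_mul]
  set g : ℂ[X] := ∑ k, C (lam k) * p k with hg
  have hXPg : XP = Polynomial.aeval X g := by
    rw [hXP, hg, map_sum]
    refine Finset.sum_congr rfl fun k _ => ?_
    rw [map_mul, aeval_C, hP k, ← Algebra.smul_def]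
  have hXNg : XN = Polynomial.aeval X (Polynomial.X - g) := by
    rw [hXN, map_sub, aeval_X, hXPg]
  have hgmod : ∀ j, q j ∣ g - C (lam j) := by
    intro j
    have h1 : ∑ k, C (lam k) * (if k = j then (1 : ℂ[X]) else 0) = C (lam j) := by
      simp [mul_ite, mul_one, mul_zero]
    have h2 : g - C (lam j) = ∑ k, C (lam k) * (p k - if k = j then 1 else 0) := by
      rw [hg, ← h1, ← Finset.sum_sub_distrib]
      exact Finset.sum_congr rfl fun k _ => by ring
    rw [h2]
    exact Finset.dvd_sum fun k _ => (hcrt k j).mul_left _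
  -- part 1
  have hcomm1 : XP * XN = XN * XP := by
    rw [hXPg, hXNg, ← map_mul, ← map_mul, mul_comm]
  -- part 2
  set M := ∑ k, m k with hM
  have hXNM : XN ^ M = 0 := by
    rw [hXNg, ← map_pow]
    apply key
    intro j
    have hle : m j ≤ M := Finset.single_le_sum (fun k _ => Nat.zero_le _) (Finset.mem_univ j)
    have h1 : q j ∣ (Polynomial.X - C (lam j)) ^ M := pow_dvd_pow _ hle
    have h2 : q j ∣ (Polynomial.X - g) ^ M - (Polynomial.X - C (lam j)) ^ M := by
      refine dvd_trans ?_ (sub_dvd_pow_sub_pow (Polynomial.X - g) (Polynomial.X - C (lam j)) M)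
      have : (Polynomial.X - g) - (Polynomial.X - C (lam j)) = -(g - C (lam j)) := by ring
      rw [this]
      exact (hgmod j).neg_right
    have := dvd_add h2 h1
    simpa using this
  have hXNnil : IsNilpotent XN := ⟨M, hXNM⟩
  -- transfer nilpotency exponent to n
  set e := Matrix.toLinAlgEquiv' (R := ℂ) (n := Fin n) with he
  have hnil_pow_n : ∀ A : Matrix (Fin n) (Fin n) ℂ, IsNilpotent A → A ^ n = 0 := by
    intro A hA
    obtain ⟨k, hk⟩ := hA
    have h1 : IsNilpotent (e A) := ⟨k, by rw [← map_pow, hk, map_zero]⟩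
    have h2 : (e A) ^ n = 0 := by
      have hcp := (LinearMap.isNilpotent_iff_charpoly (e A)).mp h1
      have h3 := LinearMap.aeval_self_charpoly (e A)
      rw [hcp, Polynomial.aeval_X_pow, Module.finrank_fin_fun] at h3
      exact h3
    have : e (A ^ n) = e 0 := by rw [map_pow, h2, map_zero]
    exact e.injective this
  have hXNn : XN ^ n = 0 := hnil_pow_n XN hXNnil
  refine ⟨hcomm1, hXNn, ?_⟩
  -- uniqueness
  intro S N hXeq hSdiag hNn hSN
  have hSNc : Commute S N := hSN
  have hSX : Commute S X := by rw [hXeq]; exact (Commute.refl S).add_right hSNc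
  have hNX : Commute N X := by rw [hXeq]; exact (hSNc.symm).add_right (Commute.refl N)
  have hSXP : Commute S XP := by rw [hXPg]; exact my_commute_aeval hSX g
  have hNXN : Commute N XN := by rw [hXNg]; exact my_commute_aeval hNX _
  have hsub : S - XP = XN - N := by
    rw [hXN, hXeq]; abel
  have hnilD : IsNilpotent (S - XP) := by
    rw [hsub]
    exact Commute.isNilpotent_sub hNXN.symm hXNnil ⟨n, hNn⟩
  -- XP is semisimple
  have hsemXP : Module.End.IsSemisimple (e XP) := by
    set qP : ℂ[X] := ∏ k, (Polynomial.X - C (lam k)) with hqP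
    have hsf : Squarefree qP :=
      (Polynomial.separable_prod_X_sub_C_iff.mpr hlam).squarefree
    have hz : Polynomial.aeval XP qP = 0 := by
      rw [hXPg, ← aeval_comp]
      apply key
      intro j
      have hcompeq : qP.comp g = ∏ k, (g - C (lam k)) := by
        rw [hqP, prod_comp]
        exact Finset.prod_congr rfl fun k _ => by simp
      rw [hcompeq]
      exact (hgmod j).trans (Finset.dvd_prod_of_mem _ (Finset.mem_univ j))
    refine Module.End.isSemisimple_of_squarefree_aeval_eq_zero hsf ?_
    rw [show e XP = e.toAlgHom XP from rfl, aeval_algHom_apply, hz, map_zero]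
  -- S is semisimple
  have hsemS : Module.End.IsSemisimple (e S) := by
    obtain ⟨U, D, hU, hD, hSUD⟩ := hSdiag
    obtain ⟨u, hu⟩ := hU
    set s : Finset ℂ := Finset.image (fun i => D i i) Finset.univ with hs
    set qS : ℂ[X] := ∏ μ ∈ s, (Polynomial.X - C μ) with hqS
    have hsf : Squarefree qS := by
      have : (∏ μ ∈ s, (Polynomial.X - C (id μ))).Separable :=
        Polynomial.separable_prod_X_sub_C_iff'.mpr (fun x _ y _ h => h)
      simpa [hqS] using this.squarefree
    have hDz : Polynomial.aeval D qS = 0 := by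
      have hDdiag : D = Matrix.diagonal (fun i => D i i) := hD.diagonal_diag.symm
      rw [hDdiag, my_aeval_diagonal]
      have : ∀ i, Polynomial.eval (D i i) qS = 0 := by
        intro i
        rw [hqS, eval_prod]
        refine Finset.prod_eq_zero (Finset.mem_image_of_mem (fun i => D i i) (Finset.mem_univ i)) ?_
        simp
      simp [funext this]
    have hSz : Polynomial.aeval S qS = 0 := by
      have hSUD' : S = (u : Matrix (Fin n) (Fin n) ℂ) * D * ((u⁻¹ : _ˣ) : Matrix (Fin n) (Fin n) ℂ) := by
        rw [hSUD, ← hu, Matrix.coe_units_inv]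
      rw [hSUD', my_aeval_conj, hDz, mul_zero, zero_mul]
    refine Module.End.isSemisimple_of_squarefree_aeval_eq_zero hsf ?_
    rw [show e S = e.toAlgHom S from rfl, aeval_algHom_apply, hSz, map_zero]
  have hcommE : Commute (e S) (e XP) := by
    show e S * e XP = e XP * e S
    rw [← map_mul, ← map_mul, hSXP.eq]
  have hsemD : Module.End.IsSemisimple (e S - e XP) :=
    Module.End.IsSemisimple.sub_of_commute hcommE hsemS hsemXP
  have hnilE : IsNilpotent (e S - e XP) := by
    obtain ⟨k, hk⟩ := hnilD
    exact ⟨k, by rw [← map_sub, ← map_pow, hk, map_zero]⟩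
  have hD0 : e S - e XP = 0 := Module.End.eq_zero_of_isNilpotent_isSemisimple hnilE hsemD
  have hSXPeq : S = XP := by
    have : e S = e XP := by rwa [sub_eq_zero] at hD0
    exact e.injective this
  refine ⟨hSXPeq, ?_⟩
  rw [hXN, hXeq, hSXPeq]
  abel
end
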